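/- arXiv:1005.1151 — 5 statements merged into one kernel-verified Lean document; each statement's English description precedes it below -/
import Mathlib

section
/- Let K ⊆ ℝ^k be a nontrivial pointed closed convex cone and M ⊆ ℝ^k a polyhedral set with M ∩ K = {0}. Then there exists γ ∈ ℝ^k \ {0} such that γᵀu < 0 ≤ γᵀm for all u ∈ K \ {0} and all m ∈ M. -/
open Matrix Filter Topology

/-!
Near `0` the polyhedron `M` looks like the polyhedral cone `E` cut out by its constraints that are
active at `0`, so `E ∩ K = {0}` as well. The slice of `K` by the unit sphere is compact, and its
convex hull misses `0` because `K` is pointed, hence misses `E`. A hyperplane strictly separating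
that hull from the closed convex cone `E` gives `γ`: negative on `K \ {0}` by homogeneity, and
nonnegative on `E ⊇ M` because a linear functional bounded below on a cone is nonnegative there.
-/

section Cone

variable {V : Type*} [NormedAddCommGroup V] [NormedSpace ℝ V]

theorem IsCompact.convexHull [FiniteDimensional ℝ V] {S : Set V} (hS : IsCompact S) :
    IsCompact (_root_.convexHull ℝ S) := by
  let combo (m : ℕ) (p : (Fin m → ℝ) × (Fin m → V)) : V := ∑ i, p.1 i • p.2 i
  let combos (m : ℕ) : Set V :=
    combo m '' (stdSimplex ℝ (Fin m) ×ˢ Set.univ.pi fun _ => S)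
  -- Carathéodory bounds the number of points needed in a convex combination.
  have hull_eq :
      _root_.convexHull ℝ S = ⋃ m ∈ Finset.range (Module.finrank ℝ V + 2), combos m := by
    refine subset_antisymm (fun x hx => ?_) (Set.iUnion₂_subset fun m _ => ?_)
    · obtain ⟨ι, _, z, w, hzS, hz, hw0, hw1, rfl⟩ := eq_pos_convex_span_of_mem_convexHull hx
      have hcard : Fintype.card ι < Module.finrank ℝ V + 2 :=
        Nat.lt_succ_of_le <|
          hz.card_le_finrank_succ.trans (Nat.succ_le_succ (Submodule.finrank_le _))
      let e := (Fintype.equivFin ι).symm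
      refine Set.mem_biUnion (Finset.mem_range.2 hcard)
        ⟨(w ∘ e, z ∘ e), ⟨⟨fun j => (hw0 _).le, ?_⟩, fun j _ => hzS ⟨_, rfl⟩⟩, ?_⟩
      · rw [← hw1]; exact e.sum_comp w
      · exact e.sum_comp fun i => w i • z i
    · rintro _ ⟨⟨w, z⟩, ⟨hw, hz⟩, rfl⟩
      exact mem_convexHull_of_exists_fintype w z hw.1 hw.2 (fun i => hz i trivial) rfl
  rw [hull_eq]
  exact (Finset.range _).isCompact_biUnion fun m _ =>
    ((isCompact_stdSimplex ℝ (Fin m)).prod (isCompact_univ_pi fun _ => hS)).image (by fun_prop)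

theorem sum_mem_of_convex_of_smul_mem {K : Set V}
    (hKcone : ∀ c : ℝ, 0 ≤ c → ∀ x ∈ K, c • x ∈ K) (hKconvex : Convex ℝ K) (h0K : (0 : V) ∈ K)
    {ι : Type*} (s : Finset ι) {f : ι → V} (hf : ∀ i ∈ s, f i ∈ K) : ∑ i ∈ s, f i ∈ K := by
  refine Finset.sum_induction f (· ∈ K) (fun x y hx hy => ?_) h0K hf
  have hmid : (2 : ℝ)⁻¹ • x + (2 : ℝ)⁻¹ • y ∈ K :=
    hKconvex hx hy (by norm_num) (by norm_num) (by norm_num)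
  simpa [smul_add, smul_smul] using hKcone 2 zero_le_two _ hmid

theorem zero_notMem_convexHull_inter_sphere {K : Set V}
    (hKcone : ∀ c : ℝ, 0 ≤ c → ∀ x ∈ K, c • x ∈ K) (hKconvex : Convex ℝ K)
    (hKpointed : K ∩ -K = {0}) :
    (0 : V) ∉ convexHull ℝ (K ∩ Metric.sphere 0 1) := by
  classical
  intro h0
  obtain ⟨ι, _, w, z, hw0, hw1, hz, hsum⟩ := mem_convexHull_iff_exists_fintype.1 h0
  obtain ⟨i, hi⟩ : ∃ i, 0 < w i := by
    by_contra! h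
    have : ∑ i, w i ≤ 0 := Finset.sum_nonpos fun i _ => h i
    linarith
  have hwzK : ∀ j, w j • z j ∈ K := fun j => hKcone _ (hw0 j) _ (hz j).1
  have hrest : ∑ j ∈ Finset.univ.erase i, w j • z j ∈ K :=
    sum_mem_of_convex_of_smul_mem hKcone hKconvex (by simpa using hKcone 0 le_rfl _ (hz i).1)
      _ fun j _ => hwzK j
  have hneg : -(w i • z i) = ∑ j ∈ Finset.univ.erase i, w j • z j := by
    rw [neg_eq_iff_add_eq_zero, ← hsum]
    exact Finset.add_sum_erase _ (fun j => w j • z j) (Finset.mem_univ i)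
  have hpointed : w i • z i ∈ K ∩ -K := ⟨hwzK i, by rw [Set.mem_neg, hneg]; exact hrest⟩
  rw [hKpointed, Set.mem_singleton_iff, smul_eq_zero] at hpointed
  have hnorm := (hz i).2
  rcases hpointed with h | h
  · exact hi.ne' h
  · simp [h] at hnorm

theorem nonneg_on_cone_of_lt {E : Set V} (hEcone : ∀ c : ℝ, 0 ≤ c → ∀ x ∈ E, c • x ∈ E)
    {f : StrongDual ℝ V} {v : ℝ} (hv : ∀ x ∈ E, v < f x) : ∀ x ∈ E, 0 ≤ f x := by
  intro x hx
  by_contra! hfx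
  have hv0 : v < 0 := by simpa using hv 0 (by simpa using hEcone 0 le_rfl x hx)
  have := hv ((v / f x) • x) (hEcone _ (div_nonneg_of_nonpos hv0.le hfx.le) x hx)
  rw [map_smul, smul_eq_mul, div_mul_cancel₀ _ hfx.ne] at this
  exact this.false

theorem exists_strongDual_neg_on_cone_nonneg_on_cone [FiniteDimensional ℝ V] {K E : Set V}
    (hKcone : ∀ c : ℝ, 0 ≤ c → ∀ x ∈ K, c • x ∈ K) (hKclosed : IsClosed K)
    (hKconvex : Convex ℝ K) (hKpointed : K ∩ -K = {0})
    (hEcone : ∀ c : ℝ, 0 ≤ c → ∀ x ∈ E, c • x ∈ E) (hEclosed : IsClosed E)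
    (hEconvex : Convex ℝ E) (hEK : E ∩ K = {0}) :
    ∃ f : StrongDual ℝ V, (∀ u ∈ K, u ≠ 0 → f u < 0) ∧ ∀ x ∈ E, 0 ≤ f x := by
  set C := convexHull ℝ (K ∩ Metric.sphere 0 1)
  have hCK : C ⊆ K := convexHull_min Set.inter_subset_left hKconvex
  have hdisj : Disjoint C E := by
    refine Set.disjoint_left.2 fun x hxC hxE => ?_
    obtain rfl : x = 0 := hEK.subset ⟨hxE, hCK hxC⟩
    exact zero_notMem_convexHull_inter_sphere hKcone hKconvex hKpointed hxC
  obtain ⟨f, u, v, hfC, huv, hfE⟩ := geometric_hahn_banach_compact_closed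
    (convex_convexHull ℝ _) ((isCompact_sphere 0 1).inter_left hKclosed).convexHull
    hEconvex hEclosed hdisj
  have hv : v < 0 := by simpa using hfE 0 (hEK.symm.subset rfl).1
  refine ⟨f, fun x hxK hx => ?_, nonneg_on_cone_of_lt hEcone hfE⟩
  have hxC : ‖x‖⁻¹ • x ∈ C := subset_convexHull ℝ _
    ⟨hKcone _ (inv_nonneg.2 (norm_nonneg x)) x hxK, by simp [norm_smul, hx]⟩
  have := (hfC _ hxC).trans (huv.trans hv)
  rw [map_smul, smul_eq_mul] at this
  exact neg_of_mul_neg_right this (inv_nonneg.2 (norm_nonneg x))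

end Cone

section Polyhedron

variable {n ι : Type*} [Fintype n]

/-- For a polyhedron `{x | ∀ i, a i ⬝ᵥ x ≤ β i}` containing `0`, the cone cut out by the
constraints active at `0`. -/
def activeConstraintCone (a : ι → n → ℝ) (β : ι → ℝ) : Set (n → ℝ) :=
  {x | ∀ i, β i ≤ 0 → a i ⬝ᵥ x ≤ 0}

theorem isClosed_activeConstraintCone (a : ι → n → ℝ) (β : ι → ℝ) :
    IsClosed (activeConstraintCone a β) := by
  simp only [activeConstraintCone, Set.ofPred_forall]
  exact isClosed_iInter fun i => isClosed_iInter fun _ =>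
    isClosed_le (continuous_const.dotProduct continuous_id) continuous_const

theorem convex_activeConstraintCone (a : ι → n → ℝ) (β : ι → ℝ) :
    Convex ℝ (activeConstraintCone a β) := by
  intro x hx y hy s t hs ht _ i hi
  rw [dotProduct_add, dotProduct_smul, dotProduct_smul]
  exact add_nonpos (smul_nonpos_of_nonneg_of_nonpos hs (hx i hi))
    (smul_nonpos_of_nonneg_of_nonpos ht (hy i hi))

theorem smul_mem_activeConstraintCone (a : ι → n → ℝ) (β : ι → ℝ) :
    ∀ c : ℝ, 0 ≤ c → ∀ x ∈ activeConstraintCone a β, c • x ∈ activeConstraintCone a β := by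
  intro c hc x hx i hi
  rw [dotProduct_smul]
  exact smul_nonpos_of_nonneg_of_nonpos hc (hx i hi)

theorem setOf_le_subset_activeConstraintCone (a : ι → n → ℝ) (β : ι → ℝ) :
    {x | ∀ i, a i ⬝ᵥ x ≤ β i} ⊆ activeConstraintCone a β :=
  fun _ hx i hi => (hx i).trans hi

theorem exists_pos_smul_mem_of_mem_activeConstraintCone [Finite ι] {a : ι → n → ℝ}
    {β : ι → ℝ} (hβ : ∀ i, 0 ≤ β i) {x : n → ℝ} (hx : x ∈ activeConstraintCone a β) :
    ∃ t : ℝ, 0 < t ∧ ∀ i, a i ⬝ᵥ (t • x) ≤ β i := by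
  have hsmall : ∀ᶠ t : ℝ in 𝓝[>] 0, ∀ i, a i ⬝ᵥ (t • x) ≤ β i := by
    refine eventually_all.2 fun i => ?_
    simp only [dotProduct_smul, smul_eq_mul]
    rcases (hβ i).eq_or_lt with hβi | hβi
    · filter_upwards [self_mem_nhdsWithin] with t ht
      rw [← hβi]
      exact mul_nonpos_of_nonneg_of_nonpos (le_of_lt ht) (hx i hβi.ge)
    · have hlim : Tendsto (fun t : ℝ => t * (a i ⬝ᵥ x)) (𝓝[>] 0) (𝓝 0) :=
        ((continuous_id.mul continuous_const).tendsto' 0 0 (zero_mul _)).mono_left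
          nhdsWithin_le_nhds
      exact (hlim.eventually (gt_mem_nhds hβi)).mono fun _ => le_of_lt
  obtain ⟨t, htM, ht⟩ := (hsmall.and self_mem_nhdsWithin).exists
  exact ⟨t, ht, htM⟩

theorem activeConstraintCone_inter_eq_singleton [Finite ι] {a : ι → n → ℝ} {β : ι → ℝ}
    {K : Set (n → ℝ)} (hKcone : ∀ c : ℝ, 0 ≤ c → ∀ x ∈ K, c • x ∈ K)
    (hMK : {x | ∀ i, a i ⬝ᵥ x ≤ β i} ∩ K = {0}) :
    activeConstraintCone a β ∩ K = {0} := by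
  have h0 : (0 : n → ℝ) ∈ {x | ∀ i, a i ⬝ᵥ x ≤ β i} ∩ K := hMK ▸ Set.mem_singleton 0
  have hβ : ∀ i, 0 ≤ β i := by simpa using h0.1
  refine subset_antisymm ?_ ?_
  · rintro x ⟨hxE, hxK⟩
    obtain ⟨t, ht, htM⟩ := exists_pos_smul_mem_of_mem_activeConstraintCone hβ hxE
    have htx : t • x ∈ ({0} : Set (n → ℝ)) := hMK ▸ ⟨htM, hKcone t ht.le x hxK⟩
    exact (smul_eq_zero.1 htx).resolve_left ht.ne'
  · rintro _ rfl
    exact ⟨setOf_le_subset_activeConstraintCone a β h0.1, h0.2⟩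

end Polyhedron

theorem StrongDual.exists_dotProduct_eq {n : Type*} [Fintype n] (f : StrongDual ℝ (n → ℝ)) :
    ∃ γ : n → ℝ, ∀ x, γ ⬝ᵥ x = f x := by
  classical
  exact ⟨(dotProductEquiv ℝ n).symm f, fun x =>
    LinearMap.congr_fun ((dotProductEquiv ℝ n).apply_symm_apply (f : (n → ℝ) →ₗ[ℝ] ℝ)) x⟩

theorem stmt0_general (k : ℕ) (K M : Set (Fin k → ℝ))
    (hKcone : ∀ (c : ℝ), 0 ≤ c → ∀ x ∈ K, c • x ∈ K)
    (hKclosed : IsClosed K) (hKconvex : Convex ℝ K)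
    (hKpointed : K ∩ (-K) = {0})
    (hKne : K ≠ {0})
    (hMpoly : ∃ (N : ℕ) (a : Fin N → (Fin k → ℝ)) (β : Fin N → ℝ),
      M = {x | ∀ i, a i ⬝ᵥ x ≤ β i})
    (hMK : M ∩ K = {0}) :
    ∃ γ : Fin k → ℝ, γ ≠ 0 ∧ (∀ u ∈ K, u ≠ 0 → γ ⬝ᵥ u < 0) ∧
      (∀ m ∈ M, 0 ≤ γ ⬝ᵥ m) := by
  obtain ⟨N, a, β, rfl⟩ := hMpoly
  obtain ⟨f, hfK, hfE⟩ := exists_strongDual_neg_on_cone_nonneg_on_cone hKcone hKclosed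
    hKconvex hKpointed (smul_mem_activeConstraintCone a β) (isClosed_activeConstraintCone a β)
    (convex_activeConstraintCone a β) (activeConstraintCone_inter_eq_singleton hKcone hMK)
  obtain ⟨γ, hγ⟩ := f.exists_dotProduct_eq
  have h0K : (0 : Fin k → ℝ) ∈ K := (hMK ▸ Set.mem_singleton 0 : _ ∈ _ ∩ K).2
  obtain ⟨u, huK, hu⟩ := ((Set.nontrivial_iff_ne_singleton h0K).2 hKne).exists_ne 0
  refine ⟨γ, ?_, fun x hx hx0 => hγ x ▸ hfK x hx hx0,
    fun m hm => hγ m ▸ hfE m (setOf_le_subset_activeConstraintCone a β hm)⟩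
  rintro rfl
  exact (hfK u huK hu).ne' (by rw [← hγ, zero_dotProduct])

theorem stmt0 (k : ℕ) (K M : Set (Fin k → ℝ))
    (hKcone : ∀ (c : ℝ), 0 ≤ c → ∀ x ∈ K, c • x ∈ K)
    (hKclosed : IsClosed K) (hKconvex : Convex ℝ K)
    (hKpointed : K ∩ (-K) = {0})
    (hKne : K ≠ {0}) (hKuniv : K ≠ Set.univ)
    (hMpoly : ∃ (N : ℕ) (a : Fin N → (Fin k → ℝ)) (β : Fin N → ℝ),
      M = {x | ∀ i, a i ⬝ᵥ x ≤ β i})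
    (hMK : M ∩ K = {0}) :
    ∃ γ : Fin k → ℝ, γ ≠ 0 ∧ (∀ u ∈ K, u ≠ 0 → γ ⬝ᵥ u < 0) ∧
      (∀ m ∈ M, 0 ≤ γ ⬝ᵥ m) :=
  stmt0_general k K M hKcone hKclosed hKconvex hKpointed hKne hMpoly hMK
end

section
/- Let K ⊆ ℝ^k be a nontrivial pointed closed convex cone, L ∈ ℝ^{k×n}, A ∈ ℝ^{m×n}, b ∈ ℝ^m, and 𝒜 = {x ∈ ℝ^n_+ : Ax = b}. If x̄ ∈ 𝒜 is an efficient solution to the problem of minimizing Lx over 𝒜 with respect to K, then x̄ is properly efficient in the sense of linear scalarization, i.e. there exists λ in the quasi-interior K*⁰ of the dual cone such that λᵀ(Lx̄) ≤ λᵀ(Lx) for all x ∈ 𝒜. -/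
/-!
Let `Q` be the image under `L` of the homogenized directions `t • x̄ - y` with `t ≥ 0`, `y ≥ 0`
and `A (t • x̄ - y) = 0`. It contains every `L x̄ - L x` with `x ∈ 𝒜`, and efficiency of `x̄` forces
`Q ∩ K = {0}`. As a linear image of a sliced orthant, `Q` is closed: a linear
dependence among the active generators lets one of them be dropped (Carathéodory), until the
cone is an injective linear image of an orthant. Finitely many Farkas separations of `-v` from
`K`, for unit vectors `v ∈ K`, add up to a functional `e` positive on `K \ {0}`, so
`{w ∈ K | e w = 1}` is a compact convex base of `K`; separating it from `Q` gives `λ`.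
-/

open Matrix Set

namespace ProperCone

variable {E : Type*} [AddCommGroup E] [Module ℝ E] [TopologicalSpace E]

def ofConvex (K : Set E) (hK0 : (0 : E) ∈ K) (hKsmul : ∀ c : ℝ, 0 ≤ c → ∀ x ∈ K, c • x ∈ K)
    (hKconv : Convex ℝ K) (hKclosed : IsClosed K) : ProperCone ℝ E where
  carrier := K
  add_mem' {x y} hx hy := by
    have h := hKsmul 2 zero_le_two _ (hKconv hx hy (by norm_num : (0 : ℝ) ≤ 1 / 2)
      (by norm_num : (0 : ℝ) ≤ 1 / 2) (by norm_num))
    rwa [smul_add, smul_smul, smul_smul, mul_one_div_cancel two_ne_zero, one_smul, one_smul] at h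
  zero_mem' := hK0
  smul_mem' c x hx := hKsmul c c.2 x hx
  isClosed' := hKclosed

end ProperCone

section FinitelyGeneratedCone

variable {ι E : Type*} [Fintype ι]

lemma exists_nonneg_sub_div_smul {z d : ι → ℝ} (hz : 0 ≤ z) (hd : ∃ i, 0 < d i) :
    ∃ j, 0 < d j ∧ 0 ≤ z - (z j / d j) • d := by
  classical
  obtain ⟨i₀, hi₀⟩ := hd
  obtain ⟨j, hj, hmin⟩ := Finset.exists_min_image {i | 0 < d i} (fun i => z i / d i)
    ⟨i₀, by simpa using hi₀⟩
  simp only [Finset.mem_filter, Finset.mem_univ, true_and] at hj hmin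
  refine ⟨j, hj, fun i => ?_⟩
  have ht : 0 ≤ z j / d j := div_nonneg (hz j) hj.le
  simp only [Pi.zero_apply, Pi.sub_apply, Pi.smul_apply, smul_eq_mul, sub_nonneg]
  rcases le_or_gt (d i) 0 with hi | hi
  · have hzi : 0 ≤ z i := hz i
    linarith [mul_nonpos_of_nonneg_of_nonpos ht hi]
  · calc z j / d j * d i ≤ z i / d i * d i :=
          mul_le_mul_of_nonneg_right (hmin i hi) hi.le
      _ = z i := div_mul_cancel₀ _ hi.ne'

def nonnegSupportedOn (s : Finset ι) : Set (ι → ℝ) := {z | 0 ≤ z ∧ ∀ i ∉ s, z i = 0}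

variable [AddCommGroup E] [Module ℝ E]

lemma image_nonnegSupportedOn_eq_biUnion [DecidableEq ι] (Φ : (ι → ℝ) →ₗ[ℝ] E) {s : Finset ι}
    {d : ι → ℝ} (hds : ∀ i ∉ s, d i = 0) (hΦd : Φ d = 0) (hd : ∃ i, 0 < d i) :
    Φ '' nonnegSupportedOn s = ⋃ j ∈ s, Φ '' nonnegSupportedOn (s.erase j) := by
  refine subset_antisymm ?_ (iUnion₂_subset fun j _ => image_mono fun z hz =>
    ⟨hz.1, fun i hi => hz.2 i fun h => hi (Finset.mem_of_mem_erase h)⟩)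
  · rintro _ ⟨z, ⟨hz, hzs⟩, rfl⟩
    obtain ⟨j, hj, hnonneg⟩ := exists_nonneg_sub_div_smul hz hd
    have hjs : j ∈ s := by_contra fun h => hj.ne' (hds j h)
    refine mem_biUnion hjs ⟨z - (z j / d j) • d, ⟨hnonneg, fun i hi => ?_⟩, by
      rw [map_sub, map_smul, hΦd, smul_zero, sub_zero]⟩
    rcases eq_or_ne i j with rfl | hij
    · simp [div_mul_cancel₀ _ hj.ne']
    · have his : i ∉ s := fun h => hi (Finset.mem_erase.mpr ⟨hij, h⟩)
      simp [hzs i his, hds i his]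

variable [TopologicalSpace E] [IsTopologicalAddGroup E] [ContinuousSMul ℝ E] [T2Space E]

lemma isClosed_image_nonnegSupportedOn (Φ : (ι → ℝ) →ₗ[ℝ] E) (s : Finset ι) :
    IsClosed (Φ '' nonnegSupportedOn s) := by
  classical
  induction s using Finset.strongInduction with
  | H s ih =>
  by_cases hdep : ∃ d : ι → ℝ, (∀ i ∉ s, d i = 0) ∧ Φ d = 0 ∧ d ≠ 0
  · obtain ⟨d, hds, hΦd, hd0⟩ := hdep
    have hpos : ∃ d' : ι → ℝ, (∀ i ∉ s, d' i = 0) ∧ Φ d' = 0 ∧ ∃ i, 0 < d' i := by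
      obtain ⟨i, hi⟩ := Function.ne_iff.mp hd0
      rcases (Ne.lt_or_gt hi : d i < 0 ∨ 0 < d i) with hneg | hpos
      · exact ⟨-d, fun j hj => by simp [hds j hj], by simp [hΦd], i, by simpa using hneg⟩
      · exact ⟨d, hds, hΦd, i, hpos⟩
    obtain ⟨d', hds', hΦd', hd'⟩ := hpos
    rw [image_nonnegSupportedOn_eq_biUnion Φ hds' hΦd' hd']
    exact isClosed_biUnion_finset fun j hj => ih _ (Finset.erase_ssubset hj)
  · push Not at hdep
    set V : Submodule ℝ (ι → ℝ) := Submodule.pi (↑s)ᶜ fun _ => ⊥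
    have hker : LinearMap.ker (Φ.domRestrict V) = ⊥ := by
      rw [LinearMap.ker_eq_bot']
      rintro ⟨d, hd⟩ hΦd
      exact Subtype.ext (hdep d (fun i hi => by simpa using (Submodule.mem_pi.mp hd) i hi) hΦd)
    have heq : Φ '' nonnegSupportedOn s = Φ.domRestrict V '' (Subtype.val ⁻¹' Ici 0) := by
      rw [LinearMap.domRestrict, LinearMap.coe_comp, Set.image_comp, Submodule.coe_subtype,
        Set.image_preimage_eq_inter_range, Subtype.range_coe]
      congr 1
    rw [heq]
    exact (LinearMap.isClosedEmbedding_of_injective hker).isClosedMap _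
      (isClosed_Ici.preimage continuous_subtype_val)

theorem isClosed_image_nonneg (Φ : (ι → ℝ) →ₗ[ℝ] E) : IsClosed (Φ '' Ici 0) := by
  simpa [nonnegSupportedOn, Ici] using isClosed_image_nonnegSupportedOn Φ Finset.univ

variable {F : Type*} [AddCommGroup F] [Module ℝ F] [TopologicalSpace F] [IsTopologicalAddGroup F]
  [ContinuousSMul ℝ F] [T2Space F]

theorem isClosed_image_nonneg_inter_ker (Φ : (ι → ℝ) →ₗ[ℝ] E) (Ψ : (ι → ℝ) →ₗ[ℝ] F) :
    IsClosed (Φ '' (Ici 0 ∩ LinearMap.ker Ψ)) := by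
  have heq : Φ '' (Ici 0 ∩ LinearMap.ker Ψ) =
      (fun v => (v, (0 : F))) ⁻¹' (Φ.prod Ψ '' Ici 0) := by
    ext v
    simp only [mem_image, mem_preimage, mem_inter_iff, SetLike.mem_coe, LinearMap.mem_ker,
      mem_Ici, LinearMap.prod_apply, Function.prod, Prod.mk.injEq]
    exact exists_congr fun z => by tauto
  rw [heq]
  exact (isClosed_image_nonneg (Φ.prod Ψ)).preimage (continuous_id.prodMk continuous_const)

def ProperCone.imageNonnegInterKer (Φ : (ι → ℝ) →ₗ[ℝ] E) (Ψ : (ι → ℝ) →ₗ[ℝ] F) :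
    ProperCone ℝ E :=
  .ofConvex (Φ '' (Ici 0 ∩ LinearMap.ker Ψ)) ⟨0, ⟨self_mem_Ici, map_zero Ψ⟩, map_zero Φ⟩
    (fun c hc _ ⟨z, ⟨hz, hΨz⟩, hΦz⟩ =>
      ⟨c • z, ⟨mem_Ici.mpr (smul_nonneg hc hz), by simp_all⟩, by rw [map_smul, hΦz]⟩)
    (((convex_Ici 0).inter (LinearMap.ker Ψ).convex).linear_image Φ)
    (isClosed_image_nonneg_inter_ker Φ Ψ)

end FinitelyGeneratedCone

namespace ProperCone

variable {E : Type*} [NormedAddCommGroup E] [NormedSpace ℝ E] [FiniteDimensional ℝ E]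

lemma isCompact_inter_sphere (K : ProperCone ℝ E) : IsCompact ((K : Set E) ∩ Metric.sphere 0 1) :=
  (isCompact_sphere 0 1).inter_left K.isClosed

theorem exists_strongDual_pos_of_salient (K : ProperCone ℝ E)
    (hK : (K : ConvexCone ℝ E).Salient) : ∃ e : StrongDual ℝ E, ∀ v ∈ K, v ≠ 0 → 0 < e v := by
  have hsep : ∀ v : ↥((K : Set E) ∩ Metric.sphere 0 1),
      ∃ f : StrongDual ℝ E, (∀ x ∈ K, 0 ≤ f x) ∧ 0 < f v := fun ⟨v, hvK, hv1⟩ => by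
    obtain ⟨f, hfK, hf⟩ :=
      K.hyperplane_separation_point (hK v hvK (ne_zero_of_mem_unit_sphere ⟨v, hv1⟩))
    exact ⟨f, hfK, by simpa using hf⟩
  choose f hfK hfv using hsep
  obtain ⟨t, ht⟩ := K.isCompact_inter_sphere.elim_finite_subcover (fun v => {x | 0 < f v x})
    (fun v => isOpen_lt continuous_const (f v).continuous)
    fun v hv => mem_iUnion.mpr ⟨⟨v, hv⟩, hfv _⟩
  have hpos : ∀ y ∈ (K : Set E) ∩ Metric.sphere 0 1, 0 < (∑ v ∈ t, f v) y := fun y hy => by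
    obtain ⟨v, hv, hvy⟩ := mem_iUnion₂.mp (ht hy)
    rw [FunLike.coe_sum, Finset.sum_apply]
    exact Finset.sum_pos' (fun w _ => hfK w y hy.1) ⟨v, hv, hvy⟩
  refine ⟨∑ v ∈ t, f v, fun x hx hx0 => ?_⟩
  have := hpos (‖x‖⁻¹ • x) ⟨K.smul_mem hx (by positivity), by simp [norm_smul, hx0]⟩
  rw [map_smul, smul_eq_mul] at this
  exact pos_of_mul_pos_right this (by positivity)

theorem exists_strongDual_nonneg_and_neg_of_salient (K Q : ProperCone ℝ E)
    (hK : (K : ConvexCone ℝ E).Salient) (hQK : ∀ v ∈ Q, v ∈ K → v = 0) :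
    ∃ f : StrongDual ℝ E, (∀ q ∈ Q, 0 ≤ f q) ∧ ∀ v ∈ K, v ≠ 0 → f v < 0 := by
  obtain ⟨e, he⟩ := K.exists_strongDual_pos_of_salient hK
  set B := (K : Set E) ∩ e ⁻¹' {1}
  have hBsub : B ⊆ (fun w => (e w)⁻¹ • w) '' ((K : Set E) ∩ Metric.sphere 0 1) := by
    rintro w ⟨hwK, hw1⟩
    have hw0 : w ≠ 0 := by rintro rfl; simp at hw1
    refine ⟨‖w‖⁻¹ • w, ⟨K.smul_mem hwK (by positivity), by simp [norm_smul, hw0]⟩, ?_⟩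
    simp_all [smul_smul]
  have hBcomp : IsCompact B := by
    refine (K.isCompact_inter_sphere.image_of_continuousOn ?_).of_isClosed_subset
      (K.isClosed.inter (isClosed_singleton.preimage e.continuous)) hBsub
    exact (e.continuous.continuousOn.inv₀ fun w hw =>
      (he w hw.1 (ne_zero_of_mem_unit_sphere ⟨w, hw.2⟩)).ne').smul continuousOn_id
  have hBconv : Convex ℝ B := K.convex.inter ((convex_singleton 1).linear_preimage e.toLinearMap)
  have hdisj : Disjoint B Q :=
    disjoint_left.mpr fun w ⟨hwK, hw1⟩ hwQ => by simp [hQK w hwQ hwK] at hw1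
  obtain ⟨f, hfQ, hfB⟩ := Q.hyperplane_separation hBconv hBcomp hdisj
  refine ⟨f, hfQ, fun v hv hv0 => ?_⟩
  have hev := he v hv hv0
  have := hfB ((e v)⁻¹ • v) ⟨K.smul_mem hv (by positivity), by simp [hev.ne']⟩
  rw [map_smul, smul_eq_mul] at this
  exact neg_of_mul_neg_right this (inv_pos.mpr hev).le

end ProperCone

section LinearProgram

variable {κ μ ν : Type*} [Fintype ν]

-- `z none` stands for `t` and `z ∘ some` for `y`.
def outcomeCone (L : Matrix κ ν ℝ) (A : Matrix μ ν ℝ) (xbar : ν → ℝ) : ProperCone ℝ (κ → ℝ) :=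
  let θ : (Option ν → ℝ) →ₗ[ℝ] ν → ℝ :=
    (LinearMap.proj none).smulRight xbar - LinearMap.funLeft ℝ ℝ some
  .imageNonnegInterKer (L.mulVecLin ∘ₗ θ) (A.mulVecLin ∘ₗ θ)

variable {L : Matrix κ ν ℝ} {A : Matrix μ ν ℝ} {b : μ → ℝ} {xbar : ν → ℝ}

lemma mem_outcomeCone {v : κ → ℝ} :
    v ∈ outcomeCone L A xbar ↔
      ∃ t : ℝ, 0 ≤ t ∧ ∃ y : ν → ℝ, 0 ≤ y ∧ A *ᵥ (t • xbar - y) = 0 ∧ L *ᵥ (t • xbar - y) = v := by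
  constructor
  · rintro ⟨z, ⟨hz, hAz⟩, rfl⟩
    exact ⟨z none, hz none, z ∘ some, fun i => hz (some i), hAz, rfl⟩
  · rintro ⟨t, ht, y, hy, hA, rfl⟩
    refine ⟨fun o => o.elim t y, ⟨fun o => ?_, hA⟩, rfl⟩
    cases o
    · exact ht
    · exact hy _

lemma eq_zero_of_mem_outcomeCone {K : Set (κ → ℝ)}
    (hKsmul : ∀ c : ℝ, 0 ≤ c → ∀ x ∈ K, c • x ∈ K)
    (hxbar : 0 ≤ xbar ∧ A *ᵥ xbar = b)
    (heff : ∀ x, (0 ≤ x ∧ A *ᵥ x = b) → L *ᵥ xbar - L *ᵥ x ∈ K → L *ᵥ x = L *ᵥ xbar)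
    {v : κ → ℝ} (hvQ : v ∈ outcomeCone L A xbar) (hvK : v ∈ K) : v = 0 := by
  obtain ⟨t, ht, y, hy, hA, rfl⟩ := mem_outcomeCone.mp hvQ
  have ht1 : (1 + t) ≠ 0 := by positivity
  have hAy : A *ᵥ y = t • b := by
    rw [mulVec_sub, mulVec_smul, hxbar.2, sub_eq_zero] at hA
    exact hA.symm
  -- `x = x̄ - (1 + t)⁻¹ • (t • x̄ - y)` is feasible, also when `t = 0`.
  set x := (1 + t)⁻¹ • (xbar + y)
  have hx : 0 ≤ x ∧ A *ᵥ x = b := by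
    refine ⟨smul_nonneg (by positivity) (add_nonneg hxbar.1 hy), ?_⟩
    rw [mulVec_smul, mulVec_add, hxbar.2, hAy, show b + t • b = (1 + t) • b by module,
      inv_smul_smul₀ ht1]
  have hdiff : L *ᵥ xbar - L *ᵥ x = (1 + t)⁻¹ • L *ᵥ (t • xbar - y) := by
    calc L *ᵥ xbar - L *ᵥ x = (1 + t)⁻¹ • ((1 + t) • L *ᵥ xbar - L *ᵥ (xbar + y)) := by
          rw [smul_sub, inv_smul_smul₀ ht1, mulVec_smul]
      _ = (1 + t)⁻¹ • L *ᵥ (t • xbar - y) := by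
          rw [mulVec_add, mulVec_sub, mulVec_smul]
          module
  have hLx := heff x hx (hdiff ▸ hKsmul _ (by positivity) _ hvK)
  rw [hLx, sub_self, eq_comm, smul_eq_zero] at hdiff
  exact hdiff.resolve_left (inv_ne_zero ht1)

end LinearProgram

theorem stmt1_general (k n m : ℕ) (K : Set (Fin k → ℝ))
    (hKcone : ∀ (c : ℝ), 0 ≤ c → ∀ x ∈ K, c • x ∈ K)
    (hKclosed : IsClosed K) (hKconvex : Convex ℝ K)
    (hKpointed : K ∩ (-K) = {0})
    (L : Matrix (Fin k) (Fin n) ℝ) (A : Matrix (Fin m) (Fin n) ℝ) (b : Fin m → ℝ)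
    (xbar : Fin n → ℝ)
    (hxbar : (∀ i, 0 ≤ xbar i) ∧ A *ᵥ xbar = b)
    (heff : ¬ ∃ x : Fin n → ℝ, ((∀ i, 0 ≤ x i) ∧ A *ᵥ x = b) ∧
      L *ᵥ xbar - L *ᵥ x ∈ K ∧ L *ᵥ x ≠ L *ᵥ xbar) :
    ∃ l : Fin k → ℝ, (∀ u ∈ K, u ≠ 0 → 0 < l ⬝ᵥ u) ∧
      ∀ x : Fin n → ℝ, ((∀ i, 0 ≤ x i) ∧ A *ᵥ x = b) →
        l ⬝ᵥ (L *ᵥ xbar) ≤ l ⬝ᵥ (L *ᵥ x) := by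
  push Not at heff
  have h0K : (0 : Fin k → ℝ) ∈ K := (hKpointed.symm.subset rfl).1
  set K' := ProperCone.ofConvex K h0K hKcone hKconvex hKclosed
  have hK' : (K' : ConvexCone ℝ (Fin k → ℝ)).Salient :=
    (PointedCone.salient_iff_inter_neg_eq_singleton _).mpr hKpointed
  obtain ⟨f, hfQ, hfK⟩ := K'.exists_strongDual_nonneg_and_neg_of_salient (outcomeCone L A xbar) hK'
    fun v hvQ hvK => eq_zero_of_mem_outcomeCone hKcone hxbar heff hvQ hvK
  set l := (dotProductEquiv ℝ (Fin k)).symm (-f.toLinearMap)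
  have hl : ∀ u, l ⬝ᵥ u = -f u := fun u =>
    LinearMap.congr_fun ((dotProductEquiv ℝ (Fin k)).apply_symm_apply _) u
  refine ⟨l, fun u hu hu0 => ?_, fun x hx => ?_⟩
  · simpa [hl] using hfK u hu hu0
  · have := hfQ _ (mem_outcomeCone.mpr
      ⟨1, zero_le_one, x, hx.1, by simp [mulVec_sub, hx.2, hxbar.2], rfl⟩)
    simpa [hl, mulVec_sub] using this

theorem stmt1 (k n m : ℕ) (K : Set (Fin k → ℝ))
    (hKcone : ∀ (c : ℝ), 0 ≤ c → ∀ x ∈ K, c • x ∈ K)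
    (hKclosed : IsClosed K) (hKconvex : Convex ℝ K)
    (hKpointed : K ∩ (-K) = {0})
    (hKne : K ≠ {0}) (hKuniv : K ≠ Set.univ)
    (L : Matrix (Fin k) (Fin n) ℝ) (A : Matrix (Fin m) (Fin n) ℝ) (b : Fin m → ℝ)
    (xbar : Fin n → ℝ)
    (hxbar : (∀ i, 0 ≤ xbar i) ∧ A *ᵥ xbar = b)
    (heff : ¬ ∃ x : Fin n → ℝ, ((∀ i, 0 ≤ x i) ∧ A *ᵥ x = b) ∧
      L *ᵥ xbar - L *ᵥ x ∈ K ∧ L *ᵥ x ≠ L *ᵥ xbar) :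
    ∃ l : Fin k → ℝ, (∀ u ∈ K, u ≠ 0 → 0 < l ⬝ᵥ u) ∧
      ∀ x : Fin n → ℝ, ((∀ i, 0 ≤ x i) ∧ A *ᵥ x = b) →
        l ⬝ᵥ (L *ᵥ xbar) ≤ l ⬝ᵥ (L *ᵥ x) :=
  stmt1_general k n m K hKcone hKclosed hKconvex hKpointed L A b xbar hxbar heff
end

section
/- Weak duality: with 𝒜 = {x ∈ ℝ^n_+ : Ax = b} and ℬ = {(λ, U, v) ∈ K*⁰ × ℝ^{k×m} × ℝ^k : λᵀv = 0 and (L − UA)ᵀλ ∈ ℝ^n_+}, there exist no x ∈ 𝒜 and (λ, U, v) ∈ ℬ such that Ub + v − Lx ∈ K \ {0}. -/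
/-!
For feasible `x` and `(λ, U, v)`, using `Ax = b` and `λᵀv = 0`,
`λᵀ(Ub + v - Lx) = -((L - UA)ᵀλ)ᵀx ≤ 0`, whereas `λ` lies in the quasi-interior of `K*`,
so `λᵀw > 0` for every `w ∈ K \ {0}`.
-/

open Matrix

theorem Matrix.dotProduct_mulVec_le_of_transpose_mulVec_nonneg
    {R k m n : Type*} [CommRing R] [PartialOrder R] [IsOrderedRing R]
    [Fintype k] [Fintype m] [Fintype n]
    {L : Matrix k n R} {A : Matrix m n R} {U : Matrix k m R} {b : m → R} {x : n → R}
    {l : k → R} (hx : 0 ≤ x) (hAx : A *ᵥ x = b) (hl : 0 ≤ (L - U * A)ᵀ *ᵥ l) :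
    l ⬝ᵥ (U *ᵥ b) ≤ l ⬝ᵥ (L *ᵥ x) := by
  have hgap : l ⬝ᵥ (L *ᵥ x) - l ⬝ᵥ (U *ᵥ b) = ((L - U * A)ᵀ *ᵥ l) ⬝ᵥ x := by
    rw [mulVec_transpose, ← dotProduct_mulVec, sub_mulVec, ← mulVec_mulVec, hAx,
      dotProduct_sub]
  exact sub_nonneg.mp (hgap ▸ dotProduct_nonneg_of_nonneg hl hx)

theorem stmt3_general (k n m : ℕ) (K : Set (Fin k → ℝ))
    (L : Matrix (Fin k) (Fin n) ℝ) (A : Matrix (Fin m) (Fin n) ℝ) (b : Fin m → ℝ) :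
    ¬ ∃ (x : Fin n → ℝ) (l : Fin k → ℝ) (U : Matrix (Fin k) (Fin m) ℝ) (v : Fin k → ℝ),
      ((∀ i, 0 ≤ x i) ∧ A *ᵥ x = b) ∧
      ((∀ u ∈ K, u ≠ 0 → 0 < l ⬝ᵥ u) ∧ l ⬝ᵥ v = 0 ∧ ∀ i, 0 ≤ ((L - U * A)ᵀ *ᵥ l) i) ∧
      (U *ᵥ b + v - L *ᵥ x ∈ K ∧ U *ᵥ b + v - L *ᵥ x ≠ 0) := by
  rintro ⟨x, l, U, v, ⟨hx, hAx⟩, ⟨hl, hlv, hLUA⟩, hwK, hw⟩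
  have hpos : 0 < l ⬝ᵥ (U *ᵥ b + v - L *ᵥ x) := hl _ hwK hw
  have hle : l ⬝ᵥ (U *ᵥ b) ≤ l ⬝ᵥ (L *ᵥ x) :=
    dotProduct_mulVec_le_of_transpose_mulVec_nonneg hx hAx hLUA
  rw [dotProduct_sub, dotProduct_add, hlv, add_zero] at hpos
  linarith

theorem stmt3 (k n m : ℕ) (K : Set (Fin k → ℝ))
    (hKcone : ∀ (c : ℝ), 0 ≤ c → ∀ x ∈ K, c • x ∈ K)
    (hKclosed : IsClosed K) (hKconvex : Convex ℝ K)
    (hKpointed : K ∩ (-K) = {0})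
    (hKne : K ≠ {0}) (hKuniv : K ≠ Set.univ)
    (L : Matrix (Fin k) (Fin n) ℝ) (A : Matrix (Fin m) (Fin n) ℝ) (b : Fin m → ℝ) :
    ¬ ∃ (x : Fin n → ℝ) (l : Fin k → ℝ) (U : Matrix (Fin k) (Fin m) ℝ) (v : Fin k → ℝ),
      ((∀ i, 0 ≤ x i) ∧ A *ᵥ x = b) ∧
      ((∀ u ∈ K, u ≠ 0 → 0 < l ⬝ᵥ u) ∧ l ⬝ᵥ v = 0 ∧ ∀ i, 0 ≤ ((L - U * A)ᵀ *ᵥ l) i) ∧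
      (U *ᵥ b + v - L *ᵥ x ∈ K ∧ U *ᵥ b + v - L *ᵥ x ≠ 0) :=
  stmt3_general k n m K L A b
end

section
/- Converse duality: if (λ̄, Ū, v̄) ∈ ℬ = {(λ, U, v) ∈ K*⁰ × ℝ^{k×m} × ℝ^k : λᵀv = 0, (L − UA)ᵀλ ∈ ℝ^n_+} is an efficient (maximal) solution to the dual of maximizing Ub + v over ℬ with respect to K, then there exists x̄ ∈ 𝒜 = {x ∈ ℝ^n_+ : Ax = b}, an efficient solution to minimizing Lx over 𝒜, with Lx̄ = Ūb + v̄. -/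
/-!
If the system `x ≥ 0, A x = b, L x = Ū b + v̄` had no solution, Farkas' lemma would give
`y, w` with `yᵀA + wᵀL ≤ 0` and `bᵀy + (Ū b + v̄)ᵀw > 0`. Since `K` is a closed cone, the
quasi-interior `K*⁰` of its dual is open, so `λ̄ - t w ∈ K*⁰` for some `t > 0`; a rank-one `U`
with `Uᵀ(λ̄ - t w) = Ūᵀλ̄ + t y` and a suitable `v` then give a dual feasible point with value
`Ū b + v̄ + s d` for a nonzero `d ∈ K` and `s > 0`, contradicting maximality. A solution `x̄` is
efficient by weak duality: `λ̄ᵀ L x ≥ λ̄ᵀ(Ū b + v̄) = λ̄ᵀ L x̄` for every feasible `x`, while `λ̄`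
is strictly positive on `K \ {0}`.
-/

open Matrix Filter Topology

section Farkas

variable {ι : Type*} [Fintype ι]

theorem exists_nonneg_sum_smul_eq_or_exists_dotProduct_pos :
    ∀ {n : ℕ} (a : Fin n → ι → ℝ) (q : ι → ℝ),
      (∃ x : Fin n → ℝ, 0 ≤ x ∧ ∑ j, x j • a j = q) ∨
        ∃ z : ι → ℝ, (∀ j, a j ⬝ᵥ z ≤ 0) ∧ 0 < q ⬝ᵥ z
  | 0, a, q => by
    by_cases hq : q = 0
    · exact .inl ⟨0, le_rfl, by simp [hq]⟩
    · refine .inr ⟨q, finZeroElim, lt_of_le_of_ne ?_ (Ne.symm (dotProduct_self_eq_zero.not.2 hq))⟩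
      exact Finset.sum_nonneg fun i _ => mul_self_nonneg (q i)
  | n + 1, a, q => by
    rcases exists_nonneg_sum_smul_eq_or_exists_dotProduct_pos (fun j => a j.castSucc) q with
      ⟨x, hx, hxq⟩ | ⟨z, hz, hqz⟩
    · refine .inl ⟨Fin.snoc x 0,
        fun i => Fin.lastCases (by simp) (fun j => by simpa using hx j) i, ?_⟩
      simp [Fin.sum_univ_castSucc, hxq]
    set e := a (Fin.last n)
    obtain he | hβ := le_or_gt (e ⬝ᵥ z) 0
    · exact .inr ⟨z, Fin.lastCases he hz, hqz⟩
    set β := e ⬝ᵥ z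
    -- `P` projects the last generator `e` away along `z`; by `hP`, a certificate `w` for the
    -- projected system lifts to the certificate `w - (e ⬝ᵥ w / β) • z` for the original one.
    set P : (ι → ℝ) → ι → ℝ := fun u => u - (u ⬝ᵥ z / β) • e
    have hP : ∀ u w, P u ⬝ᵥ w = u ⬝ᵥ (w - (e ⬝ᵥ w / β) • z) := fun u w => by
      simp only [P, sub_dotProduct, dotProduct_sub, smul_dotProduct, dotProduct_smul, smul_eq_mul]
      ring
    rcases exists_nonneg_sum_smul_eq_or_exists_dotProduct_pos (fun j => P (a j.castSucc)) (P q)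
      with ⟨x, hx, hxq⟩ | ⟨w, hw, hqw⟩
    · set γ := q ⬝ᵥ z / β - ∑ j, x j * (a j.castSucc ⬝ᵥ z / β)
      have hγ : 0 ≤ γ := by
        have : ∑ j, x j * (a j.castSucc ⬝ᵥ z / β) ≤ 0 :=
          Finset.sum_nonpos fun j _ => mul_nonpos_of_nonneg_of_nonpos (hx j)
            (div_nonpos_of_nonpos_of_nonneg (hz j) hβ.le)
        linarith [div_pos hqz hβ]
      refine .inl ⟨Fin.snoc x γ, fun i => Fin.lastCases
        (by simpa only [Pi.zero_apply, Fin.snoc_last]) (fun j => by simpa using hx j) i, ?_⟩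
      simp only [P, smul_sub, Finset.sum_sub_distrib, smul_smul, ← Finset.sum_smul] at hxq
      rw [Fin.sum_univ_castSucc]
      simp only [Fin.snoc_castSucc, Fin.snoc_last, γ, sub_smul]
      linear_combination (norm := module) hxq
    · have he : e ⬝ᵥ (w - (e ⬝ᵥ w / β) • z) ≤ 0 := by
        rw [← hP]
        simp [P, β, hβ.ne']
      refine .inr ⟨w - (e ⬝ᵥ w / β) • z, Fin.lastCases he fun j => by rw [← hP]; exact hw j, ?_⟩
      rw [← hP]
      exact hqw

theorem Matrix.exists_nonneg_mulVec_eq_or_exists_vecMul_nonpos {ν : Type*} [Fintype ν]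
    (M : Matrix ι ν ℝ) (q : ι → ℝ) :
    (∃ x : ν → ℝ, 0 ≤ x ∧ M *ᵥ x = q) ∨ ∃ z : ι → ℝ, z ᵥ* M ≤ 0 ∧ 0 < q ⬝ᵥ z := by
  let e := Fintype.equivFin ν
  rcases exists_nonneg_sum_smul_eq_or_exists_dotProduct_pos (fun j i => M i (e.symm j)) q with
    ⟨x, hx, hxq⟩ | ⟨z, hz, hqz⟩
  · refine .inl ⟨x ∘ e, fun i => hx (e i), ?_⟩
    subst hxq
    ext i
    simp only [mulVec, dotProduct, Finset.sum_apply, Pi.smul_apply, smul_eq_mul,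
      Function.comp_apply]
    rw [← e.symm.sum_comp]
    simp [mul_comm]
  · refine .inr ⟨z, fun i => ?_, hqz⟩
    simpa [vecMul, dotProduct, mul_comm] using hz (e i)

end Farkas

section StrictDual

variable {ι : Type*} [Fintype ι]

/-- The quasi-interior `K*⁰` of the dual cone of `K`. -/
def strictDual (K : Set (ι → ℝ)) : Set (ι → ℝ) := {l | ∀ u ∈ K, u ≠ 0 → 0 < l ⬝ᵥ u}

theorem isOpen_setOf_forall_pos_dotProduct {S : Set (ι → ℝ)} (hS : IsCompact S) :
    IsOpen {l : ι → ℝ | ∀ u ∈ S, 0 < l ⬝ᵥ u} :=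
  isOpen_iff_mem_nhds.2 fun _ hl => hS.eventually_forall_of_forall_eventually fun u hu =>
    continuousAt_const.eventually_lt
      (continuous_fst.dotProduct continuous_snd).continuousAt (hl u hu)

theorem strictDual_eq_setOf_forall_sphere {K : Set (ι → ℝ)}
    (hK : ∀ c : ℝ, 0 ≤ c → ∀ x ∈ K, c • x ∈ K) :
    strictDual K = {l | ∀ u ∈ K ∩ Metric.sphere 0 1, 0 < l ⬝ᵥ u} := by
  ext l
  refine ⟨fun hl u hu => hl u hu.1 (ne_zero_of_mem_unit_sphere ⟨u, hu.2⟩), fun hl u hu hu0 => ?_⟩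
  have hnorm : 0 < ‖u‖ := norm_pos_iff.2 hu0
  have hunit : ‖u‖⁻¹ • u ∈ K ∩ Metric.sphere 0 1 :=
    ⟨hK _ (inv_nonneg.2 hnorm.le) u hu, by simp [norm_smul, hnorm.ne']⟩
  have := hl _ hunit
  rw [dotProduct_smul, smul_eq_mul] at this
  exact pos_of_mul_pos_right this (inv_nonneg.2 hnorm.le)

theorem isOpen_strictDual {K : Set (ι → ℝ)} (hKclosed : IsClosed K)
    (hK : ∀ c : ℝ, 0 ≤ c → ∀ x ∈ K, c • x ∈ K) : IsOpen (strictDual K) := by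
  rw [strictDual_eq_setOf_forall_sphere hK]
  exact isOpen_setOf_forall_pos_dotProduct ((isCompact_sphere 0 1).inter_left hKclosed)

theorem exists_pos_sub_smul_mem_strictDual {K : Set (ι → ℝ)} (hKclosed : IsClosed K)
    (hK : ∀ c : ℝ, 0 ≤ c → ∀ x ∈ K, c • x ∈ K) {l : ι → ℝ} (hl : l ∈ strictDual K)
    (w : ι → ℝ) : ∃ t : ℝ, 0 < t ∧ l - t • w ∈ strictDual K := by
  have hcont : Continuous fun t : ℝ => l - t • w := by fun_prop
  have : ∀ᶠ t in 𝓝[>] (0 : ℝ), l - t • w ∈ strictDual K :=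
    nhdsWithin_le_nhds <| (hcont.continuousAt (x := 0)).preimage_mem_nhds <|
      (isOpen_strictDual hKclosed hK).mem_nhds (by simpa using hl)
  exact (this.and self_mem_nhdsWithin).exists.imp fun t ht => ⟨ht.2, ht.1⟩

end StrictDual

theorem Matrix.exists_vecMul_eq {𝕜 ι ν : Type*} [Field 𝕜] [Fintype ι] [DecidableEq ι]
    {l : ι → 𝕜} (hl : l ≠ 0) (p : ν → 𝕜) : ∃ U : Matrix ι ν 𝕜, l ᵥ* U = p := by
  obtain ⟨i, hi⟩ : ∃ i, l i ≠ 0 := Function.ne_iff.1 hl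
  exact ⟨vecMulVec (Pi.single i (l i)⁻¹) p, by simp [vecMul_vecMulVec, dotProduct_single, hi]⟩

theorem Matrix.exists_nonneg_mulVec_eq_and_or_exists {ι κ ν : Type*} [Fintype ι] [Fintype κ]
    [Fintype ν] (A : Matrix ι ν ℝ) (L : Matrix κ ν ℝ) (b : ι → ℝ) (c : κ → ℝ) :
    (∃ x : ν → ℝ, 0 ≤ x ∧ A *ᵥ x = b ∧ L *ᵥ x = c) ∨
      ∃ (y : ι → ℝ) (w : κ → ℝ), y ᵥ* A + w ᵥ* L ≤ 0 ∧ 0 < b ⬝ᵥ y + c ⬝ᵥ w := by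
  rcases (fromRows A L).exists_nonneg_mulVec_eq_or_exists_vecMul_nonpos (Sum.elim b c) with
    ⟨x, hx, hxbc⟩ | ⟨z, hz, hbcz⟩
  · rw [fromRows_mulVec] at hxbc
    exact .inl ⟨x, hx, funext fun i => by simpa using congrFun hxbc (.inl i),
      funext fun i => by simpa using congrFun hxbc (.inr i)⟩
  · rw [vecMul_fromRows] at hz
    rw [← Sum.elim_comp_inl_inr z, sumElim_dotProduct_sumElim] at hbcz
    exact .inr ⟨_, _, hz, hbcz⟩

section Dual

variable {ι κ ν : Type*} [Fintype ι] [Fintype κ]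
  {K : Set (κ → ℝ)} {L : Matrix κ ν ℝ} {A : Matrix ι ν ℝ} {b : ι → ℝ}

variable (K L A) in
/-- `(l, U, v)` lies in the feasible set `ℬ` of the dual problem. -/
def DualFeasible (l : κ → ℝ) (U : Matrix κ ι ℝ) (v : κ → ℝ) : Prop :=
  l ∈ strictDual K ∧ l ⬝ᵥ v = 0 ∧ ∀ i, 0 ≤ ((L - U * A)ᵀ *ᵥ l) i

theorem DualFeasible.vecMul_le {l : κ → ℝ} {U : Matrix κ ι ℝ} {v : κ → ℝ}
    (h : DualFeasible K L A l U v) : (l ᵥ* U) ᵥ* A ≤ l ᵥ* L := by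
  have := h.2.2
  simp only [mulVec_transpose, vecMul_sub, Pi.sub_apply, sub_nonneg] at this
  rw [vecMul_vecMul]
  exact this

theorem DualFeasible.dotProduct_le [Fintype ν] {l : κ → ℝ} {U : Matrix κ ι ℝ} {v : κ → ℝ}
    (h : DualFeasible K L A l U v) {x : ν → ℝ} (hx : 0 ≤ x) (hAx : A *ᵥ x = b) :
    l ⬝ᵥ (U *ᵥ b + v) ≤ l ⬝ᵥ (L *ᵥ x) :=
  calc l ⬝ᵥ (U *ᵥ b + v) = ((l ᵥ* U) ᵥ* A) ⬝ᵥ x := by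
        rw [dotProduct_add, h.2.1, add_zero, ← hAx, dotProduct_mulVec, dotProduct_mulVec]
    _ ≤ (l ᵥ* L) ⬝ᵥ x := dotProduct_le_dotProduct_of_nonneg_right h.vecMul_le hx
    _ = l ⬝ᵥ (L *ᵥ x) := (dotProduct_mulVec _ _ _).symm

theorem exists_dualFeasible_eq_add_smul [DecidableEq κ] {l : κ → ℝ} (hl : l ∈ strictDual K)
    {d : κ → ℝ} (hd : d ∈ K) (hd0 : d ≠ 0) {p : ι → ℝ} (hp : p ᵥ* A ≤ l ᵥ* L) {c : κ → ℝ}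
    (hc : l ⬝ᵥ c < p ⬝ᵥ b) :
    ∃ U v, DualFeasible K L A l U v ∧ ∃ s : ℝ, 0 < s ∧ U *ᵥ b + v = c + s • d := by
  have hld : 0 < l ⬝ᵥ d := hl d hd hd0
  have hl0 : l ≠ 0 := by
    rintro rfl
    simp at hld
  obtain ⟨U, hU⟩ := exists_vecMul_eq hl0 p
  set s := (p ⬝ᵥ b - l ⬝ᵥ c) / (l ⬝ᵥ d)
  refine ⟨U, c + s • d - U *ᵥ b, ⟨hl, ?_, fun i => ?_⟩, s, div_pos (sub_pos.2 hc) hld, by abel⟩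
  · rw [dotProduct_sub, dotProduct_add, dotProduct_smul, dotProduct_mulVec, hU, smul_eq_mul,
      div_mul_cancel₀ _ hld.ne', dotProduct_comm p]
    ring
  · rw [mulVec_transpose, vecMul_sub, ← vecMul_vecMul, hU, Pi.sub_apply, sub_nonneg]
    exact hp i

theorem DualFeasible.exists_add_smul [DecidableEq κ] (hKclosed : IsClosed K)
    (hK : ∀ c : ℝ, 0 ≤ c → ∀ x ∈ K, c • x ∈ K) {l : κ → ℝ} {U : Matrix κ ι ℝ} {v : κ → ℝ}
    (h : DualFeasible K L A l U v) {d : κ → ℝ} (hd : d ∈ K) (hd0 : d ≠ 0) {y : ι → ℝ}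
    {w : κ → ℝ} (hyw : y ᵥ* A + w ᵥ* L ≤ 0) (hpos : 0 < b ⬝ᵥ y + (U *ᵥ b + v) ⬝ᵥ w) :
    ∃ l' U' v', DualFeasible K L A l' U' v' ∧
      ∃ s : ℝ, 0 < s ∧ U' *ᵥ b + v' = U *ᵥ b + v + s • d := by
  obtain ⟨t, ht, hlt⟩ := exists_pos_sub_smul_mem_strictDual hKclosed hK h.1 w
  have hp : (l ᵥ* U + t • y) ᵥ* A ≤ (l - t • w) ᵥ* L := by
    intro i
    have hU := h.vecMul_le i
    have hyw := mul_nonpos_of_nonneg_of_nonpos ht.le (hyw i)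
    simp only [add_vecMul, sub_vecMul, smul_vecMul, Pi.add_apply, Pi.sub_apply, Pi.smul_apply,
      smul_eq_mul] at hU hyw ⊢
    linarith
  have hc : (l - t • w) ⬝ᵥ (U *ᵥ b + v) < (l ᵥ* U + t • y) ⬝ᵥ b := by
    have := mul_pos ht hpos
    simp only [sub_dotProduct, add_dotProduct, smul_dotProduct, dotProduct_add, h.2.1,
      ← dotProduct_mulVec, smul_eq_mul] at this ⊢
    rw [dotProduct_comm y, dotProduct_comm w (U *ᵥ b), dotProduct_comm w v]
    linarith
  obtain ⟨U', v', h', hs⟩ := exists_dualFeasible_eq_add_smul hlt hd hd0 hp hc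
  exact ⟨_, U', v', h', hs⟩

end Dual

theorem stmt5_general (k n m : ℕ) (K : Set (Fin k → ℝ))
    (hKcone : ∀ (c : ℝ), 0 ≤ c → ∀ x ∈ K, c • x ∈ K)
    (hKclosed : IsClosed K)
    (hKpointed : K ∩ (-K) = {0})
    (hKne : K ≠ {0})
    (L : Matrix (Fin k) (Fin n) ℝ) (A : Matrix (Fin m) (Fin n) ℝ) (b : Fin m → ℝ)
    (lbar : Fin k → ℝ) (Ubar : Matrix (Fin k) (Fin m) ℝ) (vbar : Fin k → ℝ)
    (hfeas : (∀ u ∈ K, u ≠ 0 → 0 < lbar ⬝ᵥ u) ∧ lbar ⬝ᵥ vbar = 0 ∧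
      ∀ i, 0 ≤ ((L - Ubar * A)ᵀ *ᵥ lbar) i)
    (hmax : ¬ ∃ (l : Fin k → ℝ) (U : Matrix (Fin k) (Fin m) ℝ) (v : Fin k → ℝ),
      ((∀ u ∈ K, u ≠ 0 → 0 < l ⬝ᵥ u) ∧ l ⬝ᵥ v = 0 ∧
        ∀ i, 0 ≤ ((L - U * A)ᵀ *ᵥ l) i) ∧
      (U *ᵥ b + v) - (Ubar *ᵥ b + vbar) ∈ K ∧
      (U *ᵥ b + v) - (Ubar *ᵥ b + vbar) ≠ 0) :
    ∃ xbar : Fin n → ℝ, ((∀ i, 0 ≤ xbar i) ∧ A *ᵥ xbar = b) ∧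
      (¬ ∃ x : Fin n → ℝ, ((∀ i, 0 ≤ x i) ∧ A *ᵥ x = b) ∧
        L *ᵥ xbar - L *ᵥ x ∈ K ∧ L *ᵥ xbar - L *ᵥ x ≠ 0) ∧
      L *ᵥ xbar = Ubar *ᵥ b + vbar := by
  have hfeas : DualFeasible K L A lbar Ubar vbar := hfeas
  obtain ⟨d, hdK, hd0⟩ : ∃ d ∈ K, d ≠ 0 := by
    by_contra! h
    exact hKne (Set.eq_singleton_iff_unique_mem.2 ⟨(hKpointed.ge rfl).1, h⟩)
  obtain ⟨xbar, hxbar, hAxbar, hLxbar⟩ : ∃ x, 0 ≤ x ∧ A *ᵥ x = b ∧ L *ᵥ x = Ubar *ᵥ b + vbar := by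
    refine (A.exists_nonneg_mulVec_eq_and_or_exists L b _).resolve_right ?_
    rintro ⟨y, w, hyw, hpos⟩
    obtain ⟨l, U, v, hluv, s, hs, hUv⟩ := hfeas.exists_add_smul hKclosed hKcone hdK hd0 hyw hpos
    refine hmax ⟨l, U, v, hluv, ?_, ?_⟩ <;> rw [hUv, add_sub_cancel_left]
    · exact hKcone s hs.le d hdK
    · exact smul_ne_zero hs.ne' hd0
  refine ⟨xbar, ⟨hxbar, hAxbar⟩, ?_, hLxbar⟩
  rintro ⟨x, ⟨hx, hAx⟩, hxK, hx0⟩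
  have hlt := hfeas.1 _ hxK hx0
  rw [dotProduct_sub, hLxbar] at hlt
  linarith [hfeas.dotProduct_le hx hAx]

theorem stmt5 (k n m : ℕ) (K : Set (Fin k → ℝ))
    (hKcone : ∀ (c : ℝ), 0 ≤ c → ∀ x ∈ K, c • x ∈ K)
    (hKclosed : IsClosed K) (hKconvex : Convex ℝ K)
    (hKpointed : K ∩ (-K) = {0})
    (hKne : K ≠ {0}) (hKuniv : K ≠ Set.univ)
    (L : Matrix (Fin k) (Fin n) ℝ) (A : Matrix (Fin m) (Fin n) ℝ) (b : Fin m → ℝ)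
    (lbar : Fin k → ℝ) (Ubar : Matrix (Fin k) (Fin m) ℝ) (vbar : Fin k → ℝ)
    (hfeas : (∀ u ∈ K, u ≠ 0 → 0 < lbar ⬝ᵥ u) ∧ lbar ⬝ᵥ vbar = 0 ∧
      ∀ i, 0 ≤ ((L - Ubar * A)ᵀ *ᵥ lbar) i)
    (hmax : ¬ ∃ (l : Fin k → ℝ) (U : Matrix (Fin k) (Fin m) ℝ) (v : Fin k → ℝ),
      ((∀ u ∈ K, u ≠ 0 → 0 < l ⬝ᵥ u) ∧ l ⬝ᵥ v = 0 ∧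
        ∀ i, 0 ≤ ((L - U * A)ᵀ *ᵥ l) i) ∧
      (U *ᵥ b + v) - (Ubar *ᵥ b + vbar) ∈ K ∧
      (U *ᵥ b + v) - (Ubar *ᵥ b + vbar) ≠ 0) :
    ∃ xbar : Fin n → ℝ, ((∀ i, 0 ≤ xbar i) ∧ A *ᵥ xbar = b) ∧
      (¬ ∃ x : Fin n → ℝ, ((∀ i, 0 ≤ x i) ∧ A *ᵥ x = b) ∧
        L *ᵥ xbar - L *ᵥ x ∈ K ∧ L *ᵥ xbar - L *ᵥ x ≠ 0) ∧
      L *ᵥ xbar = Ubar *ᵥ b + vbar :=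
  stmt5_general k n m K hKcone hKclosed hKpointed hKne L A b lbar Ubar vbar hfeas hmax
end

section
/- It holds h(ℬ) ⊆ h^L(ℬ^L), where ℬ = {(λ, U, v) ∈ K*⁰ × ℝ^{k×m} × ℝ^k : λᵀv = 0, (L − UA)ᵀλ ∈ ℝ^n_+} with h(λ, U, v) = Ub + v, and ℬ^L = {(λ, z, v) ∈ K*⁰ × ℝ^m × ℝ^k : λᵀv − zᵀb ≤ 0 and Lᵀλ − Aᵀz ∈ ℝ^n_+} with h^L(λ, z, v) = v. -/
/-! Given `(λ, U, v) ∈ ℬ`, the multiplier `z := Uᵀλ` puts `(λ, z, Ub + v)` in `ℬ^L`: then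
`λᵀ(Ub + v) - zᵀb = λᵀv = 0` and `Lᵀλ - Aᵀz = (L - UA)ᵀλ ≥ 0`. -/

open Matrix

section

variable {R : Type*} [CommRing R] {k m n : Type*} [Fintype k] [Fintype m]

theorem dotProduct_mulVec_add_sub_transpose_mulVec (l v : k → R) (U : Matrix k m R) (b : m → R) :
    l ⬝ᵥ (U *ᵥ b + v) - (Uᵀ *ᵥ l) ⬝ᵥ b = l ⬝ᵥ v := by
  rw [dotProduct_add, dotProduct_mulVec, ← vecMul_transpose, transpose_transpose]
  abel

theorem transpose_sub_mul_mulVec (L : Matrix k n R) (U : Matrix k m R) (A : Matrix m n R)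
    (l : k → R) : (L - U * A)ᵀ *ᵥ l = Lᵀ *ᵥ l - Aᵀ *ᵥ (Uᵀ *ᵥ l) := by
  rw [transpose_sub, transpose_mul, sub_mulVec, mulVec_mulVec]

end

theorem stmt10_general (k n m : ℕ) (K : Set (Fin k → ℝ))
    (L : Matrix (Fin k) (Fin n) ℝ) (A : Matrix (Fin m) (Fin n) ℝ) (b : Fin m → ℝ) :
    {w : Fin k → ℝ | ∃ (l : Fin k → ℝ) (U : Matrix (Fin k) (Fin m) ℝ) (v : Fin k → ℝ),
      ((∀ u ∈ K, u ≠ 0 → 0 < l ⬝ᵥ u) ∧ l ⬝ᵥ v = 0 ∧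
        ∀ i, 0 ≤ ((L - U * A)ᵀ *ᵥ l) i) ∧ U *ᵥ b + v = w} ⊆
    {w : Fin k → ℝ | ∃ (l : Fin k → ℝ) (z : Fin m → ℝ) (v : Fin k → ℝ),
      ((∀ u ∈ K, u ≠ 0 → 0 < l ⬝ᵥ u) ∧ l ⬝ᵥ v - z ⬝ᵥ b ≤ 0 ∧
        ∀ i, 0 ≤ (Lᵀ *ᵥ l - Aᵀ *ᵥ z) i) ∧ v = w} := by
  rintro w ⟨l, U, v, ⟨hl, hlv, hpos⟩, rfl⟩
  refine ⟨l, Uᵀ *ᵥ l, U *ᵥ b + v, ⟨hl, ?_, ?_⟩, rfl⟩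
  · exact ((dotProduct_mulVec_add_sub_transpose_mulVec l v U b).trans hlv).le
  · simpa only [transpose_sub_mul_mulVec] using hpos

theorem stmt10 (k n m : ℕ) (K : Set (Fin k → ℝ))
    (hKcone : ∀ (c : ℝ), 0 ≤ c → ∀ x ∈ K, c • x ∈ K)
    (hKclosed : IsClosed K) (hKconvex : Convex ℝ K)
    (hKpointed : K ∩ (-K) = {0})
    (hKne : K ≠ {0}) (hKuniv : K ≠ Set.univ)
    (L : Matrix (Fin k) (Fin n) ℝ) (A : Matrix (Fin m) (Fin n) ℝ) (b : Fin m → ℝ) :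
    {w : Fin k → ℝ | ∃ (l : Fin k → ℝ) (U : Matrix (Fin k) (Fin m) ℝ) (v : Fin k → ℝ),
      ((∀ u ∈ K, u ≠ 0 → 0 < l ⬝ᵥ u) ∧ l ⬝ᵥ v = 0 ∧
        ∀ i, 0 ≤ ((L - U * A)ᵀ *ᵥ l) i) ∧ U *ᵥ b + v = w} ⊆
    {w : Fin k → ℝ | ∃ (l : Fin k → ℝ) (z : Fin m → ℝ) (v : Fin k → ℝ),
      ((∀ u ∈ K, u ≠ 0 → 0 < l ⬝ᵥ u) ∧ l ⬝ᵥ v - z ⬝ᵥ b ≤ 0 ∧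
        ∀ i, 0 ≤ (Lᵀ *ᵥ l - Aᵀ *ᵥ z) i) ∧ v = w} :=
  stmt10_general k n m K L A b
end
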